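/- arXiv:1012.5377 — 7 statements merged into one kernel-verified Lean document; each statement's English description precedes it below -/
import Mathlib

section
/- Let Γ be a countable group, π an orthogonal representation of Γ on a real Hilbert space H_ℝ, S a family of subgroups of Γ, and b : Γ → H_ℝ a 1-cocycle for π. Assume that π is mixing relative to S and that b is bounded on every subgroup Σ ∈ S. Let H ≤ Γ be an abelian subgroup and (g_n) a sequence in Γ such that g_n H g_n⁻¹ = H for every n, such that (g_n) tends to infinity relative to S, and such that sup_n ‖b(g_n)‖ < ∞. Then b is bounded on H, i.e. sup_{h ∈ H} ‖b(h)‖ < ∞. -/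
open scoped RealInnerProductSpace

/-- `b` is a 1-cocycle for the orthogonal representation `π`. -/
def IsCocycle {G : Type*} [Group G] {V : Type*} [NormedAddCommGroup V]
    [InnerProductSpace ℝ V] (π : G →* (V ≃ₗᵢ[ℝ] V)) (b : G → V) : Prop :=
  ∀ g h : G, b (g * h) = b g + π g (b h)

/-- `F` is small relative to the family `S` of subgroups: it is contained in a finite
union of double cosets `g Σ h`. -/
def SmallRel {G : Type*} [Group G] (S : Set (Subgroup G)) (F : Set G) : Prop :=
  ∃ (n : ℕ) (g h : Fin n → G) (Sigs : Fin n → Subgroup G),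
    (∀ i, Sigs i ∈ S) ∧ F ⊆ ⋃ i, (fun s => g i * s * h i) '' (Sigs i : Set G)

/-- `π` is mixing relative to the family `S` of subgroups. -/
def MixingRel {G : Type*} [Group G] {V : Type*} [NormedAddCommGroup V]
    [InnerProductSpace ℝ V] (π : G →* (V ≃ₗᵢ[ℝ] V)) (S : Set (Subgroup G)) : Prop :=
  ∀ (ξ η : V) (ε : ℝ), 0 < ε → ∃ F : Set G, SmallRel S F ∧
    ∀ g : G, g ∉ F → |⟪π g ξ, η⟫| < ε

/-- The sequence `g` tends to infinity relative to the family `S` of subgroups. -/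
def TendsToInftyRel {G : Type*} [Group G] (S : Set (Subgroup G)) (g : ℕ → G) : Prop :=
  ∀ F : Set G, SmallRel S F → ∀ᶠ n in Filter.atTop, g n ∉ F

/-- The cocycle `b` is bounded on the subset `T`. -/
def BoundedOn {G : Type*} [Group G] {V : Type*} [NormedAddCommGroup V]
    [InnerProductSpace ℝ V] (b : G → V) (T : Set G) : Prop :=
  ∃ C : ℝ, ∀ g ∈ T, ‖b g‖ ≤ C

section Helpers

variable {G : Type*} [Group G] {V : Type*} [NormedAddCommGroup V] [InnerProductSpace ℝ V]
variable {π : G →* (V ≃ₗᵢ[ℝ] V)} {b : G → V}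

lemma pi_mul_apply (π : G →* (V ≃ₗᵢ[ℝ] V)) (g₁ g₂ : G) (w : V) :
    π (g₁ * g₂) w = π g₁ (π g₂ w) := by
  rw [map_mul]; rfl

lemma pi_one_apply (π : G →* (V ≃ₗᵢ[ℝ] V)) (w : V) : π 1 w = w := by
  rw [map_one]; rfl

lemma b_one (hb : IsCocycle π b) : b 1 = 0 := by
  have h := hb 1 1
  rw [one_mul, pi_one_apply] at h
  exact left_eq_add.mp h

lemma b_inv (hb : IsCocycle π b) (x : G) : b x⁻¹ = -(π x⁻¹ (b x)) := by
  have h := hb x⁻¹ x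
  rw [inv_mul_cancel, b_one hb] at h
  exact eq_neg_of_add_eq_zero_left h.symm

lemma norm_b_inv (hb : IsCocycle π b) (x : G) : ‖b x⁻¹‖ = ‖b x‖ := by
  rw [b_inv hb, norm_neg, LinearIsometryEquiv.norm_map]

lemma inner_pi_left (π : G →* (V ≃ₗᵢ[ℝ] V)) (g : G) (w z : V) :
    ⟪π g w, z⟫ = ⟪w, π g⁻¹ z⟫ := by
  have h1 : π g (π g⁻¹ z) = z := by
    rw [← pi_mul_apply, mul_inv_cancel, pi_one_apply]
  calc ⟪π g w, z⟫ = ⟪π g w, π g (π g⁻¹ z)⟫ := by rw [h1]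
    _ = ⟪w, π g⁻¹ z⟫ := (π g).inner_map_map w _

lemma b_conj (hb : IsCocycle π b) (u y : G) :
    b (u * y * u⁻¹) = b u + π u (b y) - π (u * y * u⁻¹) (b u) := by
  have h1 : u * y * u⁻¹ = u * (y * u⁻¹) := by group
  have h2 : π u (π y (π u⁻¹ (b u))) = π (u * y * u⁻¹) (b u) := by
    rw [← pi_mul_apply, ← pi_mul_apply]
  calc b (u * y * u⁻¹) = b (u * (y * u⁻¹)) := by rw [h1]
    _ = b u + π u (b (y * u⁻¹)) := hb u (y * u⁻¹)
    _ = b u + π u (b y + π y (-(π u⁻¹ (b u)))) := by rw [hb y u⁻¹, b_inv hb]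
    _ = b u + π u (b y) - π u (π y (π u⁻¹ (b u))) := by
        rw [map_add, map_neg, map_neg]; abel
    _ = b u + π u (b y) - π (u * y * u⁻¹) (b u) := by rw [h2]

lemma smallrel_inv {S : Set (Subgroup G)} {F : Set G} (hF : SmallRel S F) :
    SmallRel S {y : G | y⁻¹ ∈ F} := by
  obtain ⟨n, gg, hh, Sigs, hS, hsub⟩ := hF
  refine ⟨n, fun i => (hh i)⁻¹, fun i => (gg i)⁻¹, Sigs, hS, ?_⟩
  intro y hy
  have h1 := hsub hy
  rw [Set.mem_iUnion] at h1 ⊢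
  obtain ⟨i, s, hsmem, hseq⟩ := h1
  refine ⟨i, s⁻¹, ?_, ?_⟩
  · rw [SetLike.mem_coe] at hsmem ⊢
    exact inv_mem hsmem
  · simp only at hseq ⊢
    have h2 : y = (gg i * s * hh i)⁻¹ := by rw [hseq, inv_inv]
    rw [h2]
    group

/-- Almost fixed point for the affine action of a subgroup on which the cocycle is
bounded: near-circumcenter of the orbit of `0`. -/
lemma exists_almost_fixed (hb : IsCocycle π b) (Λ : Subgroup G) (K : ℝ)
    (hK : ∀ l : Λ, ‖b ↑l‖ ≤ K) :
    ∃ v : V, ∀ l : Λ, ‖b ↑l - (v - π ↑l v)‖ ≤ 1 := by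
  haveI : Nonempty ↥Λ := ⟨1⟩
  set R : V → ℝ := fun w => ⨆ l : Λ, ‖w - b ↑l‖ with hRdef
  have hbdd : ∀ w : V, BddAbove (Set.range fun l : Λ => ‖w - b ↑l‖) := by
    intro w
    refine ⟨‖w‖ + K, ?_⟩
    rintro s ⟨l, rfl⟩
    calc ‖w - b ↑l‖ ≤ ‖w‖ + ‖b ↑l‖ := norm_sub_le _ _
      _ ≤ ‖w‖ + K := by linarith [hK l]
  have hle : ∀ (w : V) (l : Λ), ‖w - b ↑l‖ ≤ R w := fun w l => le_ciSup (hbdd w) l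
  have hsle : ∀ (w : V) (c : ℝ), (∀ l : Λ, ‖w - b ↑l‖ ≤ c) → R w ≤ c :=
    fun w c hc => ciSup_le hc
  have hR0 : ∀ w, 0 ≤ R w := fun w => le_trans (norm_nonneg _) (hle w 1)
  set r : ℝ := ⨅ w : V, R w with hrdef
  have hrbdd : BddBelow (Set.range R) := ⟨0, by rintro s ⟨w, rfl⟩; exact hR0 w⟩
  have hrle : ∀ w, r ≤ R w := fun w => ciInf_le hrbdd w
  have hr0 : 0 ≤ r := le_ciInf hR0
  have hrK : r ≤ K := by
    refine le_trans (hrle 0) (hsle 0 K ?_)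
    intro l
    rw [zero_sub, norm_neg]
    exact hK l
  have hK0 : 0 ≤ K := le_trans hr0 hrK
  set δ : ℝ := 1 / (8 * (K + 1)) with hδdef
  have hδpos : 0 < δ := by positivity
  have hδ1 : δ ≤ 1 := by
    rw [hδdef, div_le_one (by positivity)]
    linarith
  obtain ⟨v, hv⟩ : ∃ w, R w < r + δ := by
    apply exists_lt_of_ciInf_lt
    rw [← hrdef]
    linarith
  refine ⟨v, ?_⟩
  intro l
  set w' : V := π ↑l v + b ↑l with hw'def
  have hkey : ∀ μ : Λ, w' - b ↑μ = π ↑l (v - b ↑(l⁻¹ * μ)) := by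
    intro μ
    have h2 : b ↑μ = b ↑l + π ↑l (b ↑(l⁻¹ * μ)) := by
      have h3 := hb (↑l) (↑(l⁻¹ * μ))
      have h4 : (↑l : G) * ↑(l⁻¹ * μ) = ↑μ := by
        push_cast
        group
      rw [h4] at h3
      exact h3
    rw [h2, map_sub, hw'def]
    abel
  have hRw' : R w' = R v := by
    apply le_antisymm
    · apply hsle
      intro μ
      rw [hkey μ, LinearIsometryEquiv.norm_map]
      exact hle v (l⁻¹ * μ)
    · apply hsle
      intro μ
      have h5 : v - b ↑μ = v - b ↑(l⁻¹ * (l * μ)) := by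
        congr 2
        group
      rw [h5, ← LinearIsometryEquiv.norm_map (π ↑l), ← hkey (l * μ)]
      exact hle w' (l * μ)
  -- midpoint estimate
  set m : V := (2⁻¹ : ℝ) • (v + w') with hmdef
  set B : ℝ := (2⁻¹) * (R v * R v) + (2⁻¹) * (R w' * R w') - (4⁻¹) * (‖v - w'‖ * ‖v - w'‖)
    with hBdef
  have hmid : ∀ μ : Λ, ‖m - b ↑μ‖ * ‖m - b ↑μ‖ ≤ B := by
    intro μ
    set x : V := v - b ↑μ with hxdef
    set y : V := w' - b ↑μ with hydef
    have hxy : m - b ↑μ = (2⁻¹ : ℝ) • (x + y) := by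
      rw [hmdef, hxdef, hydef]
      module
    have hsub : x - y = v - w' := by rw [hxdef, hydef]; abel
    have hpar := parallelogram_law_with_norm ℝ x y
    have hnorm : ‖m - b ↑μ‖ = 2⁻¹ * ‖x + y‖ := by
      rw [hxy, norm_smul]
      norm_num
    have hx : ‖x‖ ≤ R v := hle v μ
    have hy : ‖y‖ ≤ R w' := hle w' μ
    have hx0 : (0:ℝ) ≤ ‖x‖ := norm_nonneg _
    have hy0 : (0:ℝ) ≤ ‖y‖ := norm_nonneg _
    rw [hnorm, hBdef, ← hsub]
    nlinarith [hpar, mul_self_le_mul_self hx0 hx, mul_self_le_mul_self hy0 hy]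
  have hB0 : 0 ≤ B := le_trans (mul_self_nonneg _) (hmid 1)
  have hRmB : R m ≤ Real.sqrt B := by
    apply hsle
    intro μ
    apply Real.le_sqrt_of_sq_le
    rw [pow_two]
    exact hmid μ
  have hrB : r * r ≤ B := by
    have h6 : r ≤ Real.sqrt B := le_trans (hrle m) hRmB
    have h7 := mul_self_le_mul_self hr0 h6
    rwa [Real.mul_self_sqrt hB0] at h7
  -- conclude
  have hvw : ‖v - w'‖ * ‖v - w'‖ ≤ 1 := by
    have hRv : R v < r + δ := hv
    have hRv0 : (0:ℝ) ≤ R v := hR0 v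
    have h7 : R v * R v ≤ (r + δ) * (r + δ) :=
      mul_self_le_mul_self hRv0 (le_of_lt hRv)
    rw [hBdef, hRw'] at hrB
    have h8 : ‖v - w'‖ * ‖v - w'‖ ≤ 8 * (r * δ) + 4 * (δ * δ) := by nlinarith
    have h9 : (8 * K + 4) * δ ≤ 1 := by
      rw [hδdef, mul_one_div, div_le_one (by positivity)]
      linarith
    have h10 : r * δ ≤ K * δ := mul_le_mul_of_nonneg_right hrK (le_of_lt hδpos)
    have h11 : δ * δ ≤ 1 * δ := mul_le_mul_of_nonneg_right hδ1 (le_of_lt hδpos)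
    have h12 : (8 * K + 4) * δ = 8 * (K * δ) + 4 * (1 * δ) := by ring
    linarith
  have hfin : b ↑l - (v - π ↑l v) = w' - v := by rw [hw'def]; abel
  rw [hfin, norm_sub_rev]
  nlinarith [norm_nonneg (v - w'), hvw]


end Helpers

/-- if an abelian subgroup `A` is normalized by a sequence tending to infinity
relative to `S` on which the cocycle `b` is bounded, then `b` is bounded on `A`. -/
theorem statement0 {G : Type*} [Group G] [Countable G]
    {V : Type*} [NormedAddCommGroup V] [InnerProductSpace ℝ V] [CompleteSpace V]
    (π : G →* (V ≃ₗᵢ[ℝ] V)) (S : Set (Subgroup G)) (b : G → V)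
    (hb : IsCocycle π b) (hmix : MixingRel π S)
    (hbddS : ∀ Sg ∈ S, BoundedOn b (Sg : Set G))
    (A : Subgroup G) (hA : ∀ x ∈ A, ∀ y ∈ A, x * y = y * x)
    (g : ℕ → G) (hg : ∀ n, ∀ x : G, x ∈ A ↔ g n * x * (g n)⁻¹ ∈ A)
    (hginf : TendsToInftyRel S g)
    (hgbdd : ∃ κ : ℝ, ∀ n, ‖b (g n)‖ ≤ κ) :
    BoundedOn b (A : Set G) := by
  obtain ⟨κ, hκ⟩ := hgbdd
  have hκ0 : 0 ≤ κ := le_trans (norm_nonneg _) (hκ 0)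
  refine ⟨10 * κ + 10, ?_⟩
  intro h hh
  by_contra hLcon
  push_neg at hLcon
  set L : ℝ := ‖b h‖ with hLdef
  have hL10 : 10 * κ + 10 < L := hLcon
  have hL0 : 0 < L := by linarith
  -- the conjugates x n = (g n)⁻¹ * h * (g n)
  set x : ℕ → G := fun n => (g n)⁻¹ * h * (g n) with hxdef
  have hxval : ∀ n, x n = (g n)⁻¹ * h * ((g n)⁻¹)⁻¹ := by
    intro n; rw [hxdef]; simp only [inv_inv]
  have hxA : ∀ n, x n ∈ A := by
    intro n
    refine (hg n (x n)).mpr ?_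
    have h1 : g n * x n * (g n)⁻¹ = h := by rw [hxdef]; group
    rw [h1]; exact hh
  -- conjugation formula for b (x n)
  have hbx : ∀ n, b (x n) =
      b ((g n)⁻¹) + π ((g n)⁻¹) (b h) - π (x n) (b ((g n)⁻¹)) := by
    intro n
    have := b_conj hb ((g n)⁻¹) h
    rw [← hxval n] at this
    exact this
  have hbgn : ∀ n, ‖b ((g n)⁻¹)‖ ≤ κ := by
    intro n; rw [norm_b_inv hb]; exact hκ n
  -- the auxiliary vector d
  set d : V := b h - π h⁻¹ (b h) with hddef
  have hd : ‖d‖ ≤ 2 * L := by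
    rw [hddef]
    calc ‖b h - π h⁻¹ (b h)‖ ≤ ‖b h‖ + ‖π h⁻¹ (b h)‖ := norm_sub_le _ _
      _ = L + L := by rw [LinearIsometryEquiv.norm_map]
      _ = 2 * L := by ring
  -- commutation identity
  have hcommid : ∀ n, ⟪π (x n) (b h), b h⟫ = L * L - ⟪b (x n), d⟫ := by
    intro n
    have hcomm : h * x n = x n * h := hA h hh (x n) (hxA n)
    have t1 := hb h (x n)
    have t2 := hb (x n) h
    rw [hcomm] at t1
    have e1 : b h + π h (b (x n)) = b (x n) + π (x n) (b h) := t1.symm.trans t2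
    have e2 : ⟪b h + π h (b (x n)), b h⟫ = ⟪b (x n) + π (x n) (b h), b h⟫ := by rw [e1]
    rw [inner_add_left, inner_add_left] at e2
    have e3 : ⟪π h (b (x n)), b h⟫ = ⟪b (x n), π h⁻¹ (b h)⟫ := inner_pi_left π h _ _
    have e4 : ⟪b h, b h⟫ = L * L := by rw [real_inner_self_eq_norm_mul_norm]
    have e5 : ⟪b (x n), d⟫ = ⟪b (x n), b h⟫ - ⟪b (x n), π h⁻¹ (b h)⟫ := by
      rw [hddef, inner_sub_right]
    linarith
  -- first mixing set F' and inverse escape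
  obtain ⟨F', hF'small, hF'⟩ := hmix (b h) d 1 one_pos
  have hN₁ := hginf _ (smallrel_inv hF'small)
  rw [Filter.eventually_atTop] at hN₁
  obtain ⟨N₁, hN₁⟩ := hN₁
  -- confinement of the conjugates
  set ε₀ : ℝ := L * L - 4 * κ * L - 1 with hε₀def
  have hε₀pos : 0 < ε₀ := by nlinarith
  obtain ⟨F, hFsmall, hF⟩ := hmix (b h) (b h) ε₀ hε₀pos
  have hconf : ∀ n, N₁ ≤ n → x n ∈ F := by
    intro n hn
    by_contra hxF
    have hcoef := hF (x n) hxF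
    have hu : (g n)⁻¹ ∉ F' := hN₁ n hn
    have hμ := hF' ((g n)⁻¹) hu
    have e6 : ⟪b (x n), d⟫ =
        ⟪b ((g n)⁻¹), d⟫ - ⟪π (x n) (b ((g n)⁻¹)), d⟫ + ⟪π ((g n)⁻¹) (b h), d⟫ := by
      rw [hbx n, inner_sub_left, inner_add_left]
      ring
    have c1 : |⟪b ((g n)⁻¹), d⟫| ≤ κ * (2 * L) := by
      refine le_trans (abs_real_inner_le_norm _ _) ?_
      exact mul_le_mul (hbgn n) hd (norm_nonneg _) hκ0
    have c2 : |⟪π (x n) (b ((g n)⁻¹)), d⟫| ≤ κ * (2 * L) := by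
      refine le_trans (abs_real_inner_le_norm _ _) ?_
      rw [LinearIsometryEquiv.norm_map]
      exact mul_le_mul (hbgn n) hd (norm_nonneg _) hκ0
    have c3 := hcommid n
    have c4 := abs_le.mp c1
    have c5 := abs_le.mp c2
    have c6 := abs_le.mp (le_of_lt hμ)
    have c7 : ε₀ ≤ ⟪π (x n) (b h), b h⟫ := by
      rw [c3, e6, hε₀def]
      nlinarith
    have c8 := le_abs_self ⟪π (x n) (b h), b h⟫
    linarith
  -- pigeonhole: one double coset receives infinitely many conjugates
  obtain ⟨NF, gg, hh', Sigs, hSigs, hFsub⟩ := hFsmall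
  have hpigeon : ∃ i : Fin NF, ∀ m : ℕ, ∃ n, m ≤ n ∧ N₁ ≤ n ∧
      x n ∈ (fun s => gg i * s * hh' i) '' (Sigs i : Set G) := by
    by_contra hcon
    push_neg at hcon
    choose mm hmm using hcon
    set nstar : ℕ := max N₁ (Finset.univ.sup mm) with hnstar
    have h1 : x nstar ∈ F := hconf nstar (le_max_left _ _)
    have h2 := hFsub h1
    rw [Set.mem_iUnion] at h2
    obtain ⟨i, hi⟩ := h2
    exact hmm i nstar
      (le_trans (Finset.le_sup (Finset.mem_univ i)) (le_max_right _ _))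
      (le_max_left _ _) hi
  obtain ⟨i, hi⟩ := hpigeon
  obtain ⟨CS, hCS⟩ := hbddS (Sigs i) (hSigs i)
  set c : G := hh' i with hcdef
  -- the subgroup Λ
  set Λ : Subgroup G := A ⊓ Subgroup.comap (MulAut.conj c).toMonoidHom (Sigs i) with hΛdef
  have hΛmem : ∀ z : G, z ∈ Λ ↔ z ∈ A ∧ c * z * c⁻¹ ∈ Sigs i := by
    intro z
    rw [hΛdef, Subgroup.mem_inf, Subgroup.mem_comap]
    simp [MulAut.conj_apply]
  have hKΛ : ∀ l : Λ, ‖b ↑l‖ ≤ 2 * ‖b c‖ + CS := by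
    intro l
    obtain ⟨hlA, hlS⟩ := (hΛmem ↑l).mp l.2
    set σ : G := c * ↑l * c⁻¹ with hσdef
    have hleq : (↑l : G) = c⁻¹ * σ * (c⁻¹)⁻¹ := by rw [hσdef]; group
    have e7 : b ↑l = b (c⁻¹) + π (c⁻¹) (b σ) - π (c⁻¹ * σ * (c⁻¹)⁻¹) (b (c⁻¹)) := by
      rw [hleq]; exact b_conj hb c⁻¹ σ
    have e8 : ‖b σ‖ ≤ CS := hCS σ hlS
    have e9 : ‖b (c⁻¹)‖ = ‖b c‖ := norm_b_inv hb c
    calc ‖b ↑l‖ = ‖b (c⁻¹) + π (c⁻¹) (b σ) - π (c⁻¹ * σ * (c⁻¹)⁻¹) (b (c⁻¹))‖ := by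
          rw [e7]
      _ ≤ ‖b (c⁻¹) + π (c⁻¹) (b σ)‖ + ‖π (c⁻¹ * σ * (c⁻¹)⁻¹) (b (c⁻¹))‖ := norm_sub_le _ _
      _ ≤ ‖b (c⁻¹)‖ + ‖π (c⁻¹) (b σ)‖ + ‖π (c⁻¹ * σ * (c⁻¹)⁻¹) (b (c⁻¹))‖ := by
          have := norm_add_le (b (c⁻¹)) (π (c⁻¹) (b σ))
          linarith
      _ = ‖b c‖ + ‖b σ‖ + ‖b c‖ := by
          rw [LinearIsometryEquiv.norm_map, LinearIsometryEquiv.norm_map, e9]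
      _ ≤ 2 * ‖b c‖ + CS := by linarith
  obtain ⟨v, hvΛ⟩ := exists_almost_fixed hb Λ (2 * ‖b c‖ + CS) hKΛ
  -- first pigeonhole witness
  obtain ⟨n₀, -, hn₀N₁, hx₀mem⟩ := hi 0
  set ζ : V := b (x n₀) + π (x n₀) v with hζdef
  -- final mixing sets and escape
  obtain ⟨F₁, hF₁small, hF₁⟩ := hmix ζ (b h) 1 one_pos
  obtain ⟨F₂, hF₂small, hF₂⟩ := hmix v (π h⁻¹ (b h)) 1 one_pos
  have hN₂ := (hginf F₁ hF₁small).and (hginf F₂ hF₂small)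
  rw [Filter.eventually_atTop] at hN₂
  obtain ⟨N₂, hN₂⟩ := hN₂
  obtain ⟨n, hnN₂, hnN₁, hxnmem⟩ := hi N₂
  obtain ⟨hgF₁, hgF₂⟩ := hN₂ n hnN₂
  -- the element l of Λ
  obtain ⟨σ₀, hσ₀mem, hσ₀eq⟩ := hx₀mem
  obtain ⟨σ₁, hσ₁mem, hσ₁eq⟩ := hxnmem
  simp only at hσ₀eq hσ₁eq
  rw [SetLike.mem_coe] at hσ₀mem hσ₁mem
  set l : G := (x n₀)⁻¹ * x n with hldef
  have hlΛ : l ∈ Λ := by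
    rw [hΛmem]
    constructor
    · exact mul_mem (inv_mem (hxA n₀)) (hxA n)
    · have e10 : c * l * c⁻¹ = σ₀⁻¹ * σ₁ := by
        rw [hldef, ← hσ₀eq, ← hσ₁eq]
        group
      rw [e10]
      exact mul_mem (inv_mem hσ₀mem) hσ₁mem
  set e : V := b l - (v - π l v) with hedef
  have he : ‖e‖ ≤ 1 := hvΛ ⟨l, hlΛ⟩
  -- b (x n) in terms of ζ and v
  have hbxn : b (x n) = ζ - π (x n) v + π (x n₀) e := by
    have h1 : x n = x n₀ * l := by rw [hldef]; group
    have h2 : b (x n) = b (x n₀) + π (x n₀) (b l) := by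
      rw [h1]; exact hb _ _
    have h3 : b l = v - π l v + e := by rw [hedef]; abel
    have h4 : π (x n₀) (π l v) = π (x n) v := by rw [← pi_mul_apply, ← h1]
    rw [h2, h3, map_add, map_sub, h4, hζdef]
    abel
  -- the key identity
  have hkeyid : b h = π (g n) ζ - π h (π (g n) v) + π (g n * x n₀) e
      + b (g n) - π h (b (g n)) := by
    have h5 : π ((g n)⁻¹) (b h) = ζ - π (x n) v + π (x n₀) e
        - b ((g n)⁻¹) + π (x n) (b ((g n)⁻¹)) := by
      have t : ζ - π (x n) v + π (x n₀) e =
          b ((g n)⁻¹) + π ((g n)⁻¹) (b h) - π (x n) (b ((g n)⁻¹)) := by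
        rw [← hbxn]; exact hbx n
      calc π ((g n)⁻¹) (b h)
          = (b ((g n)⁻¹) + π ((g n)⁻¹) (b h) - π (x n) (b ((g n)⁻¹)))
            - b ((g n)⁻¹) + π (x n) (b ((g n)⁻¹)) := by abel
        _ = (ζ - π (x n) v + π (x n₀) e) - b ((g n)⁻¹) + π (x n) (b ((g n)⁻¹)) := by
            rw [← t]
        _ = ζ - π (x n) v + π (x n₀) e - b ((g n)⁻¹) + π (x n) (b ((g n)⁻¹)) := by abel
    have h7 : π (g n) (π ((g n)⁻¹) (b h)) = b h := by
      rw [← pi_mul_apply, mul_inv_cancel, pi_one_apply]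
    have h8 : g n * x n = h * g n := by rw [hxdef]; group
    have h9 : π (g n) (π (x n) v) = π h (π (g n) v) := by
      rw [← pi_mul_apply, h8, pi_mul_apply]
    have h10 : π (g n) (π (x n₀) e) = π (g n * x n₀) e :=
      (pi_mul_apply π (g n) (x n₀) e).symm
    have h11 : π (g n) (b ((g n)⁻¹)) = -(b (g n)) := by
      rw [b_inv hb, map_neg, ← pi_mul_apply, mul_inv_cancel, pi_one_apply]
    have h12 : π (g n) (π (x n) (b ((g n)⁻¹))) = -(π h (b (g n))) := by
      rw [← pi_mul_apply, h8, pi_mul_apply, h11, map_neg]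
    calc b h = π (g n) (π ((g n)⁻¹) (b h)) := h7.symm
      _ = π (g n) (ζ - π (x n) v + π (x n₀) e - b ((g n)⁻¹) + π (x n) (b ((g n)⁻¹))) := by
          rw [← h5]
      _ = π (g n) ζ - π (g n) (π (x n) v) + π (g n) (π (x n₀) e)
          - π (g n) (b ((g n)⁻¹)) + π (g n) (π (x n) (b ((g n)⁻¹))) := by
          rw [map_add, map_sub, map_add, map_sub]
      _ = π (g n) ζ - π h (π (g n) v) + π (g n * x n₀) e + b (g n) - π h (b (g n)) := by
          rw [h9, h10, h11, h12]; abel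
  -- final estimate
  have hfin : L * L = ⟪π (g n) ζ, b h⟫ - ⟪π (g n) v, π h⁻¹ (b h)⟫
      + ⟪π (g n * x n₀) e, b h⟫ + ⟪b (g n), b h⟫ - ⟪π h (b (g n)), b h⟫ := by
    have e11 : ⟪π h (π (g n) v), b h⟫ = ⟪π (g n) v, π h⁻¹ (b h)⟫ := inner_pi_left π h _ _
    have e12 : (L : ℝ) * L = ⟪b h, b h⟫ := (real_inner_self_eq_norm_mul_norm _).symm
    rw [e12]
    nth_rewrite 1 [hkeyid]
    rw [inner_sub_left, inner_add_left, inner_add_left, inner_sub_left, e11]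
  have k1 : |⟪π (g n) ζ, b h⟫| < 1 := hF₁ (g n) hgF₁
  have k2 : |⟪π (g n) v, π h⁻¹ (b h)⟫| < 1 := hF₂ (g n) hgF₂
  have k3 : |⟪π (g n * x n₀) e, b h⟫| ≤ 1 * L := by
    refine le_trans (abs_real_inner_le_norm _ _) ?_
    rw [LinearIsometryEquiv.norm_map]
    exact mul_le_mul he (le_refl L) (le_of_lt hL0) zero_le_one
  have k4 : |⟪b (g n), b h⟫| ≤ κ * L := by
    refine le_trans (abs_real_inner_le_norm _ _) ?_
    exact mul_le_mul (hκ n) (le_refl L) (le_of_lt hL0) hκ0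
  have k5 : |⟪π h (b (g n)), b h⟫| ≤ κ * L := by
    refine le_trans (abs_real_inner_le_norm _ _) ?_
    rw [LinearIsometryEquiv.norm_map]
    exact mul_le_mul (hκ n) (le_refl L) (le_of_lt hL0) hκ0
  have k1' := abs_le.mp (le_of_lt k1)
  have k2' := abs_le.mp (le_of_lt k2)
  have k3' := abs_le.mp k3
  have k4' := abs_le.mp k4
  have k5' := abs_le.mp k5
  nlinarith
end

section
/- Let Γ be a countable group, π an orthogonal representation of Γ on a real Hilbert space H_ℝ, S a family of subgroups of Γ, and b : Γ → H_ℝ a 1-cocycle for π. Assume that π is mixing relative to S. Let h ∈ Γ and let (h_n) be a sequence in Γ tending to infinity relative to S such that h commutes with h_n for every n (i.e. h = h_n h h_n⁻¹), and let κ₁ ≥ 0 satisfy ‖b(h_n)‖ ≤ κ₁ for all n. Then ‖b(h)‖ ≤ 2κ₁. -/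
open scoped RealInnerProductSpace

/-- Case 2 of the argument. If `h` commutes with every term of a sequence
`(h_n)` tending to infinity relative to `S` with `‖b(h_n)‖ ≤ κ₁`, then `‖b(h)‖ ≤ 2κ₁`. -/
theorem statement2 {G : Type*} [Group G] [Countable G]
    {V : Type*} [NormedAddCommGroup V] [InnerProductSpace ℝ V] [CompleteSpace V]
    (π : G →* (V ≃ₗᵢ[ℝ] V)) (S : Set (Subgroup G)) (b : G → V)
    (hb : IsCocycle π b) (hmix : MixingRel π S)
    (h : G) (hseq : ℕ → G) (hinf : TendsToInftyRel S hseq)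
    (hcomm : ∀ n, h = hseq n * h * (hseq n)⁻¹)
    (κ₁ : ℝ) (hκ₁ : 0 ≤ κ₁) (hbd : ∀ n, ‖b (hseq n)‖ ≤ κ₁) :
    ‖b h‖ ≤ 2 * κ₁ := by
  -- b 1 = 0
  have hb1 : b 1 = 0 := by
    have := hb 1 1
    simp at this
    exact this
  have hsq : ‖b h‖ ^ 2 ≤ 2 * κ₁ ^ 2 := by
    refine le_of_forall_pos_le_add fun ε hε => ?_
    obtain ⟨F, hF, hFsm⟩ := hmix (b h) (b h) (ε / 2) (by positivity)
    obtain ⟨n, hn⟩ := (hinf F hF).exists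
    set g := hseq n with hg
    have hc : h * g = g * h := by nth_rewrite 1 [hcomm n]; rw [← hg]; group
    have hinv : π g (b g⁻¹) = -b g := by
      have e3 := hb g g⁻¹
      rw [mul_inv_cancel, hb1] at e3
      linear_combination (norm := abel) -e3
    have key : b h - π g (b h) = b g - π h (b g) := by
      have e1 : b h = b g + π g (b (h * g⁻¹)) := by
        nth_rewrite 1 [hcomm n, mul_assoc]
        exact hb g (h * g⁻¹)
      have e2 : b (h * g⁻¹) = b h + π h (b g⁻¹) := hb h g⁻¹
      have swap : π g (π h (b g⁻¹)) = π h (π g (b g⁻¹)) := by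
        have : π (g * h) (b g⁻¹) = π (h * g) (b g⁻¹) := by rw [hc]
        simpa [map_mul] using this
      rw [e2, map_add, swap, hinv, map_neg] at e1
      rw [sub_eq_iff_eq_add]
      conv_lhs => rw [e1]
      abel
    have hnorm : ‖b h - π g (b h)‖ ≤ 2 * κ₁ := by
      rw [key]
      calc ‖b g - π h (b g)‖ ≤ ‖b g‖ + ‖π h (b g)‖ := norm_sub_le _ _
        _ = ‖b g‖ + ‖b g‖ := by rw [(π h).norm_map]
        _ ≤ 2 * κ₁ := by have := hbd n; rw [← hg] at this; linarith
    have hexp : ‖b h - π g (b h)‖ ^ 2 =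
        2 * ‖b h‖ ^ 2 - 2 * ⟪π g (b h), b h⟫ := by
      rw [norm_sub_sq_real, (π g).norm_map, real_inner_comm]
      ring
    have hip : |⟪π g (b h), b h⟫| < ε / 2 := hFsm g hn
    have h1 : ‖b h - π g (b h)‖ ^ 2 ≤ (2 * κ₁) ^ 2 := by
      have := norm_nonneg (b h - π g (b h))
      nlinarith
    have h2 : ⟪π g (b h), b h⟫ < ε / 2 := (abs_lt.mp hip).2
    nlinarith
  nlinarith [norm_nonneg (b h)]
end

section
/- Let Γ be a countable group, π an orthogonal representation of Γ on a real Hilbert space H_ℝ, S a family of subgroups of Γ, and b : Γ → H_ℝ a 1-cocycle for π. Assume that π is mixing relative to S. Let H ≤ Γ be a subgroup on which b is bounded, with κ = sup_{h ∈ H} ‖b(h)‖ < ∞, and assume that H contains a sequence (h_n) tending to infinity relative to S. Then for every g in the normalizer N_Γ(H) = {g ∈ Γ : gHg⁻¹ = H} one has ‖b(g)‖ ≤ 2κ; in particular b is bounded on N_Γ(H). -/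
open scoped RealInnerProductSpace

/-- if `b` is bounded by `κ` on a subgroup `A` containing a sequence tending
to infinity relative to `S`, then `‖b(g)‖ ≤ 2κ` for every `g` in the normalizer of `A`;
in particular `b` is bounded on the normalizer. -/
theorem statement3 {G : Type*} [Group G] [Countable G]
    {V : Type*} [NormedAddCommGroup V] [InnerProductSpace ℝ V] [CompleteSpace V]
    (π : G →* (V ≃ₗᵢ[ℝ] V)) (S : Set (Subgroup G)) (b : G → V)
    (hb : IsCocycle π b) (hmix : MixingRel π S)
    (A : Subgroup G) (κ : ℝ) (hκ : ∀ x ∈ A, ‖b x‖ ≤ κ)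
    (hseq : ℕ → G) (hmem : ∀ n, hseq n ∈ A) (hinf : TendsToInftyRel S hseq) :
    (∀ g ∈ Subgroup.normalizer (A : Set G), ‖b g‖ ≤ 2 * κ) ∧
      BoundedOn b (Subgroup.normalizer (A : Set G) : Set G) := by

  -- preliminary facts
  have hb1 : b 1 = 0 := by
    have h11 := hb 1 1
    simp only [mul_one, map_one, LinearIsometryEquiv.coe_one, id_eq] at h11
    exact add_eq_left.mp h11.symm
  have hκ0 : 0 ≤ κ := by
    have := hκ 1 A.one_mem
    rw [hb1] at this
    simpa using this
  have key : ∀ g ∈ Subgroup.normalizer (A : Set G), ‖b g‖ ≤ 2 * κ := by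
    intro g hg
    -- show ‖b g‖^2 ≤ 2κ^2 + ε for all ε > 0
    have sq_est : ∀ ε : ℝ, 0 < ε → ‖b g‖ ^ 2 ≤ 2 * κ ^ 2 + ε := by
      intro ε hε
      obtain ⟨F, hFsmall, hFmix⟩ := hmix (b g) (b g) ε hε
      -- the conjugated set is small
      have hF'small : SmallRel S {x : G | g * x * g⁻¹ ∈ F} := by
        obtain ⟨n, gs, hs, Sigs, hS, hsub⟩ := hFsmall
        refine ⟨n, fun i => g⁻¹ * gs i, fun i => hs i * g, Sigs, hS, ?_⟩
        intro x hx
        obtain ⟨i, s, hs1, hs2⟩ := by simpa using hsub hx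
        refine Set.mem_iUnion.mpr ⟨i, ⟨s, hs1, ?_⟩⟩
        show g⁻¹ * gs i * s * (hs i * g) = x
        rw [show g⁻¹ * gs i * s * (hs i * g) = g⁻¹ * (gs i * s * hs i) * g by group,
          hs2]
        group
      obtain ⟨n, hn⟩ := (hinf _ hF'small).exists
      set h := hseq n with hh
      set a := g * h * g⁻¹ with ha
      have haA : a ∈ A := (Subgroup.mem_normalizer_iff.mp hg h).mp (hmem n)
      have haF : a ∉ F := hn
      -- cocycle computation
      have e1 : b (g * h) = b g + π g (b h) := hb g h
      have e2 : b (a * g) = b a + π a (b g) := hb a g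
      have hag : a * g = g * h := by rw [ha]; group
      rw [hag, e1] at e2
      have ediff : b g - π a (b g) = b a - π g (b h) := by
        rw [sub_eq_sub_iff_add_eq_add]
        exact e2
      have hnorm : ‖b g - π a (b g)‖ ≤ 2 * κ := by
        rw [ediff]
        calc ‖b a - π g (b h)‖ ≤ ‖b a‖ + ‖π g (b h)‖ := norm_sub_le _ _
        _ = ‖b a‖ + ‖b h‖ := by rw [(π g).norm_map]
        _ ≤ κ + κ := add_le_add (hκ a haA) (hκ h (hmem n))
        _ = 2 * κ := by ring
      have hinner : |⟪π a (b g), b g⟫| < ε := hFmix a haF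
      have hexp : ‖b g - π a (b g)‖ ^ 2
          = ‖b g‖ ^ 2 - 2 * ⟪b g, π a (b g)⟫ + ‖b g‖ ^ 2 := by
        rw [@norm_sub_sq_real, (π a).norm_map]
      have hsq : ‖b g - π a (b g)‖ ^ 2 ≤ (2 * κ) ^ 2 := by
        have h0 : (0:ℝ) ≤ ‖b g - π a (b g)‖ := norm_nonneg _
        nlinarith
      have hsymm : ⟪b g, π a (b g)⟫ = ⟪π a (b g), b g⟫ := real_inner_comm _ _
      have habs : ⟪π a (b g), b g⟫ < ε ∧ -ε < ⟪π a (b g), b g⟫ := abs_lt.mp hinner |>.symm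
      nlinarith [habs.1, habs.2]
    have hsq : ‖b g‖ ^ 2 ≤ 2 * κ ^ 2 :=
      le_of_forall_pos_le_add sq_est
    nlinarith [norm_nonneg (b g)]
  exact ⟨key, ⟨2 * κ, key⟩⟩
end

section
/- Let Γ be a group, π an orthogonal representation of Γ on a real Hilbert space H_ℝ, and b : Γ → H_ℝ a 1-cocycle for π. If b is bounded, i.e. sup_{g ∈ Γ} ‖b(g)‖ < ∞, then b is a coboundary: there exists a vector ξ ∈ H_ℝ such that b(g) = π(g)ξ − ξ for all g ∈ Γ. -/
open scoped RealInnerProductSpace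

/-- a bounded 1-cocycle into an orthogonal representation on a real Hilbert
space is a coboundary. -/
theorem statement5 {G : Type*} [Group G]
    {V : Type*} [NormedAddCommGroup V] [InnerProductSpace ℝ V] [CompleteSpace V]
    (π : G →* (V ≃ₗᵢ[ℝ] V)) (b : G → V) (hb : IsCocycle π b)
    (hbdd : ∃ C : ℝ, ∀ g : G, ‖b g‖ ≤ C) :
    ∃ ξ : V, ∀ g : G, b g = π g ξ - ξ := by
  obtain ⟨C, hC⟩ := hbdd
  set r : V → ℝ := fun v => ⨆ g : G, ‖v - b g‖ with hr
  have hBdd : ∀ v : V, BddAbove (Set.range fun g : G => ‖v - b g‖) := by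
    intro v
    refine ⟨‖v‖ + C, ?_⟩
    rintro _ ⟨g, rfl⟩
    exact (norm_sub_le _ _).trans (by gcongr; exact hC g)
  have hle : ∀ (v : V) (g : G), ‖v - b g‖ ≤ r v := fun v g => le_ciSup (hBdd v) g
  have hr0 : ∀ v : V, 0 ≤ r v := fun v => (norm_nonneg _).trans (hle v 1)
  have hlip : ∀ v w : V, r v ≤ r w + ‖v - w‖ := by
    intro v w
    refine ciSup_le fun g => ?_
    calc ‖v - b g‖ ≤ ‖w - b g‖ + ‖v - w‖ := by
          have h1 : v - b g = (w - b g) + (v - w) := by abel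
          rw [h1]; exact norm_add_le _ _
      _ ≤ r w + ‖v - w‖ := by gcongr; exact hle w g
  set m : ℝ := ⨅ v : V, r v with hm
  have hmBdd : BddBelow (Set.range r) := ⟨0, by rintro _ ⟨v, rfl⟩; exact hr0 v⟩
  have hm_le : ∀ v : V, m ≤ r v := fun v => ciInf_le hmBdd v
  have hm0 : 0 ≤ m := le_ciInf hr0
  -- key parallelogram estimate
  have key : ∀ v w : V, 4 * m ^ 2 ≤ 2 * r v ^ 2 + 2 * r w ^ 2 - ‖v - w‖ ^ 2 := by
    intro v w
    set K : ℝ := (2 * r v ^ 2 + 2 * r w ^ 2 - ‖v - w‖ ^ 2) / 4 with hK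
    have hptw : ∀ g : G, ‖(1 / 2 : ℝ) • (v + w) - b g‖ ^ 2 ≤ K := by
      intro g
      have hmid : (1 / 2 : ℝ) • (v + w) - b g = (1 / 2 : ℝ) • ((v - b g) + (w - b g)) := by
        have h2 : (v - b g) + (w - b g) = (v + w) - (2 : ℝ) • b g := by
          rw [two_smul]; abel
        rw [h2, smul_sub, smul_smul]; norm_num
      have hpar := parallelogram_law_with_norm ℝ (v - b g) (w - b g)
      have hd : (v - b g) - (w - b g) = v - w := by abel
      rw [hd] at hpar
      have h1 : ‖(v - b g) + (w - b g)‖ ^ 2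
          = 2 * ‖v - b g‖ ^ 2 + 2 * ‖w - b g‖ ^ 2 - ‖v - w‖ ^ 2 := by
        simp only [pow_two]; linarith [hpar]
      have h3 : ‖(1 / 2 : ℝ) • (v + w) - b g‖ ^ 2
          = (1 / 4) * ‖(v - b g) + (w - b g)‖ ^ 2 := by
        rw [hmid, norm_smul, mul_pow]; norm_num
      have h4 : ‖v - b g‖ ^ 2 ≤ r v ^ 2 :=
        pow_le_pow_left₀ (norm_nonneg _) (hle v g) 2
      have h5 : ‖w - b g‖ ^ 2 ≤ r w ^ 2 :=
        pow_le_pow_left₀ (norm_nonneg _) (hle w g) 2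
      rw [h3, h1, hK]; linarith
    have hK0 : 0 ≤ K := le_trans (sq_nonneg _) (hptw 1)
    have hsq : ∀ g : G, ‖(1 / 2 : ℝ) • (v + w) - b g‖ ≤ Real.sqrt K := fun g =>
      (Real.le_sqrt (norm_nonneg _) hK0).mpr (hptw g)
    have hrm : r ((1 / 2 : ℝ) • (v + w)) ≤ Real.sqrt K := ciSup_le hsq
    have hmK : m ^ 2 ≤ K :=
      (Real.le_sqrt hm0 hK0).mp ((hm_le _).trans hrm)
    rw [hK] at hmK; linarith
  -- minimizing sequence
  have hseq : ∀ n : ℕ, ∃ v : V, r v < m + 1 / (n + 1) := by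
    intro n
    have : m < m + 1 / (n + 1) := by
      have : (0 : ℝ) < 1 / (n + 1) := by positivity
      linarith
    exact exists_lt_of_ciInf_lt this
  choose u hu using hseq
  have hcauchy : CauchySeq u := by
    rw [Metric.cauchySeq_iff]
    intro ε hε
    -- choose N with 4*(m + 1/(N+1))^2 - 4*m^2 < ε^2
    have htend : Filter.Tendsto (fun N : ℕ => 4 * (m + 1 / (N + 1)) ^ 2 - 4 * m ^ 2)
        Filter.atTop (nhds (4 * (m + 0) ^ 2 - 4 * m ^ 2)) := by
      apply Filter.Tendsto.sub_const
      apply Filter.Tendsto.const_mul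
      apply Filter.Tendsto.pow
      exact tendsto_const_nhds.add tendsto_one_div_add_atTop_nhds_zero_nat
    have hlim : Filter.Tendsto (fun N : ℕ => 4 * (m + 1 / (N + 1)) ^ 2 - 4 * m ^ 2)
        Filter.atTop (nhds 0) := by simpa using htend
    have hev : ∀ᶠ N in Filter.atTop,
        (4 * (m + 1 / ((N : ℕ) + 1)) ^ 2 - 4 * m ^ 2) < ε ^ 2 :=
      hlim.eventually_lt_const (by positivity)
    obtain ⟨N, hN⟩ := hev.exists
    refine ⟨N, fun p hp q hq => ?_⟩
    have hup : r (u p) < m + 1 / (N + 1) := by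
      refine (hu p).trans_le (by gcongr)
    have huq : r (u q) < m + 1 / (N + 1) := by
      refine (hu q).trans_le (by gcongr)
    have hk := key (u p) (u q)
    have hmN : 0 ≤ m + 1 / (N + 1) := by positivity
    have h6 : r (u p) ^ 2 ≤ (m + 1 / (N + 1)) ^ 2 :=
      pow_le_pow_left₀ (hr0 _) hup.le 2
    have h7 : r (u q) ^ 2 ≤ (m + 1 / (N + 1)) ^ 2 :=
      pow_le_pow_left₀ (hr0 _) huq.le 2
    have h8 : ‖u p - u q‖ ^ 2 < ε ^ 2 := by
      have : (4 * (m + 1 / ((N : ℕ) + 1)) ^ 2 - 4 * m ^ 2) < ε ^ 2 := hN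
      linarith
    have := lt_of_pow_lt_pow_left₀ 2 hε.le h8
    rwa [dist_eq_norm]
  obtain ⟨ξ', hξ'⟩ := cauchySeq_tendsto_of_complete hcauchy
  -- r ξ' = m
  have hrξ : r ξ' ≤ m := by
    have h9 : ∀ n : ℕ, r ξ' ≤ m + 1 / (n + 1) + ‖ξ' - u n‖ := by
      intro n
      exact (hlip ξ' (u n)).trans (by linarith [hu n])
    have h10 : Filter.Tendsto (fun n : ℕ => m + 1 / (n + 1) + ‖ξ' - u n‖)
        Filter.atTop (nhds (m + 0 + 0)) := by
      refine Filter.Tendsto.add ?_ ?_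
      · exact tendsto_const_nhds.add tendsto_one_div_add_atTop_nhds_zero_nat
      · have := hξ'.const_sub ξ'
        simpa using (this.norm : _)
    have h10' : Filter.Tendsto (fun n : ℕ => m + 1 / (n + 1) + ‖ξ' - u n‖)
        Filter.atTop (nhds m) := by simpa using h10
    exact ge_of_tendsto h10' (Filter.Eventually.of_forall h9)
  -- invariance: the affine action fixes ξ'
  have hinv : ∀ g : G, r (π g ξ' + b g) ≤ m := by
    intro g
    refine ciSup_le fun h => ?_
    have hbh : b h = b g + π g (b (g⁻¹ * h)) := by
      have := hb g (g⁻¹ * h)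
      rwa [mul_inv_cancel_left] at this
    have : π g ξ' + b g - b h = π g (ξ' - b (g⁻¹ * h)) := by
      rw [hbh, map_sub]; abel
    rw [this, LinearIsometryEquiv.norm_map]
    exact (hle ξ' _).trans hrξ
  have hfix : ∀ g : G, π g ξ' + b g = ξ' := by
    intro g
    have hk := key ξ' (π g ξ' + b g)
    have h11 : r ξ' ^ 2 ≤ m ^ 2 := pow_le_pow_left₀ (hr0 _) hrξ 2
    have h12 : r (π g ξ' + b g) ^ 2 ≤ m ^ 2 := pow_le_pow_left₀ (hr0 _) (hinv g) 2
    have h13 : ‖ξ' - (π g ξ' + b g)‖ ^ 2 ≤ 0 := by linarith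
    have h14 : ‖ξ' - (π g ξ' + b g)‖ = 0 := by nlinarith [norm_nonneg (ξ' - (π g ξ' + b g))]
    have := norm_eq_zero.mp h14
    have := sub_eq_zero.mp this
    exact this.symm
  refine ⟨-ξ', fun g => ?_⟩
  have h := hfix g
  rw [map_neg]
  have h2 : b g = ξ' - π g ξ' := by rw [eq_sub_iff_add_eq, add_comm]; exact h
  rw [h2]; abel
end

section
/- Let Γ be a countable group, π an orthogonal representation of Γ on a real Hilbert space H_ℝ, S a family of subgroups of Γ, and b : Γ → H_ℝ a 1-cocycle for π. If b is bounded on every subgroup Σ ∈ S, then b is bounded on every subset F ⊆ Γ that is small relative to S, i.e. sup_{g ∈ F} ‖b(g)‖ < ∞ for every such F. -/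
open scoped RealInnerProductSpace

/-- if `b` is bounded on every subgroup in `S`, then `b` is bounded on every
subset of `G` that is small relative to `S`. -/
theorem statement7 {G : Type*} [Group G] [Countable G]
    {V : Type*} [NormedAddCommGroup V] [InnerProductSpace ℝ V] [CompleteSpace V]
    (π : G →* (V ≃ₗᵢ[ℝ] V)) (S : Set (Subgroup G)) (b : G → V)
    (hb : IsCocycle π b)
    (hbddS : ∀ Sg ∈ S, BoundedOn b (Sg : Set G)) :
    ∀ F : Set G, SmallRel S F → BoundedOn b F := by
  rintro F ⟨n, g, h, Sigs, hS, hF⟩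
  choose D hD using fun i => hbddS (Sigs i) (hS i)
  refine ⟨∑ i : Fin n, (‖b (g i)‖ + max (D i) 0 + ‖b (h i)‖), ?_⟩
  intro x hx
  obtain ⟨i, s, hs, rfl⟩ := by simpa using hF hx
  have key : ‖b (g i * s * h i)‖ ≤ ‖b (g i)‖ + max (D i) 0 + ‖b (h i)‖ := by
    have e1 : b (g i * s * h i) = b (g i) + π (g i) (b s + π s (b (h i))) := by
      rw [mul_assoc, hb, hb]
    rw [e1]
    have hDs : ‖b s‖ ≤ max (D i) 0 := le_trans (hD i s hs) (le_max_left _ _)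
    calc ‖b (g i) + π (g i) (b s + π s (b (h i)))‖
        ≤ ‖b (g i)‖ + ‖π (g i) (b s + π s (b (h i)))‖ := norm_add_le _ _
      _ = ‖b (g i)‖ + ‖b s + π s (b (h i))‖ := by rw [LinearIsometryEquiv.norm_map]
      _ ≤ ‖b (g i)‖ + (‖b s‖ + ‖π s (b (h i))‖) := by
          gcongr; exact norm_add_le _ _
      _ = ‖b (g i)‖ + (‖b s‖ + ‖b (h i)‖) := by rw [LinearIsometryEquiv.norm_map]
      _ ≤ ‖b (g i)‖ + (max (D i) 0 + ‖b (h i)‖) := by gcongr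
      _ = _ := by ring
  refine key.trans (Finset.single_le_sum (f := fun i => ‖b (g i)‖ + max (D i) 0 + ‖b (h i)‖) ?_ (Finset.mem_univ i))
  intro j _
  positivity
end

section
/- Let H be a group, Σ ≤ H a subgroup and θ : Σ → H an injective group homomorphism. Let Γ = HNN(H, Σ, θ) be the HNN extension, generated by (a copy of) H and an extra element t subject to the relations tσt⁻¹ = θ(σ) for all σ ∈ Σ; identify H and Σ with their images in Γ. Let λ be the left translation representation of Γ on the real Hilbert space ℓ²_ℝ(Γ/Σ). Then there exists a unique 1-cocycle b : Γ → ℓ²_ℝ(Γ/Σ) for λ (i.e. b(gh) = b(g) + λ(g)b(h) for all g, h ∈ Γ) satisfying b(h) = 0 for all h ∈ H and b(t) = δ_{tΣ}, the indicator function of the coset tΣ. In particular b vanishes on Σ. -/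
open scoped RealInnerProductSpace Classical

noncomputable section

variable {H : Type*} [Group H] (A : Subgroup H) (θ : A →* H) (hθ : Function.Injective θ)

/-- The HNN extension `HNN(H, A, θ)` of `H` relative to the subgroup `A` and the injective
homomorphism `θ : A → H`. -/
abbrev HNNGroup : Type _ :=
  HNNExtension H A θ.range (MonoidHom.ofInjective hθ)

/-- The copy of `A` (= `Σ`) inside the HNN extension. -/
abbrev HNNSigma : Subgroup (HNNGroup A θ hθ) :=
  Subgroup.map HNNExtension.of A

/-- The coset space `Γ/Σ`. -/
abbrev HNNCoset : Type _ := HNNGroup A θ hθ ⧸ HNNSigma A θ hθ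

/-- The real Hilbert space `ℓ²_ℝ(Γ/Σ)`. -/
abbrev HNNL2 : Type _ := lp (fun _ : HNNCoset A θ hθ => ℝ) 2

/-- The action of `Γ` on `Multiplicative ℓ²(Γ/Σ)` coming from `lam`. -/
def hnnAct (lam : HNNGroup A θ hθ →* (HNNL2 A θ hθ ≃ₗᵢ[ℝ] HNNL2 A θ hθ)) :
    HNNGroup A θ hθ →* MulAut (Multiplicative (HNNL2 A θ hθ)) :=
  MonoidHom.mk' (fun g => AddEquiv.toMultiplicative (lam g).toLinearEquiv.toAddEquiv)
    (fun g h => by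
      ext x
      simp only [map_mul]
      rfl)

@[simp] lemma hnnAct_apply (lam : HNNGroup A θ hθ →* (HNNL2 A θ hθ ≃ₗᵢ[ℝ] HNNL2 A θ hθ))
    (g : HNNGroup A θ hθ) (v : Multiplicative (HNNL2 A θ hθ)) :
    Multiplicative.toAdd (hnnAct A θ hθ lam g v) = lam g (Multiplicative.toAdd v) :=
  rfl

/-- there is a unique 1-cocycle `b` for the left translation representation
of `Γ = HNN(H, Σ, θ)` on `ℓ²_ℝ(Γ/Σ)` with `b(h) = 0` for `h ∈ H` and `b(t) = δ_{tΣ}`;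
in particular `b` vanishes on `Σ`. -/
theorem statement11
    (lam : HNNGroup A θ hθ →* (HNNL2 A θ hθ ≃ₗᵢ[ℝ] HNNL2 A θ hθ))
    (hlam : ∀ (g : HNNGroup A θ hθ) (ξ : HNNL2 A θ hθ) (x : HNNCoset A θ hθ),
      (lam g ξ) x = ξ (g⁻¹ • x)) :
    ∃ b : HNNGroup A θ hθ → HNNL2 A θ hθ,
      ((∀ g h : HNNGroup A θ hθ, b (g * h) = b g + lam g (b h)) ∧
        (∀ h : H, b (HNNExtension.of h) = 0) ∧
        b HNNExtension.t =
          lp.single 2 (QuotientGroup.mk (HNNExtension.t : HNNGroup A θ hθ)) 1) ∧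
      (∀ s ∈ HNNSigma A θ hθ, b s = 0) ∧
      (∀ b' : HNNGroup A θ hθ → HNNL2 A θ hθ,
        ((∀ g h : HNNGroup A θ hθ, b' (g * h) = b' g + lam g (b' h)) ∧
          (∀ h : H, b' (HNNExtension.of h) = 0) ∧
          b' HNNExtension.t =
            lp.single 2 (QuotientGroup.mk (HNNExtension.t : HNNGroup A θ hθ)) 1) →
        b' = b) := by
  classical
  set Γ := HNNGroup A θ hθ
  set δ : HNNL2 A θ hθ := lp.single 2 (QuotientGroup.mk (HNNExtension.t : Γ)) 1 with hδ
  set φ := hnnAct A θ hθ lam with hφ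
  -- the coset `tΣ` is fixed by `of (θ a)` for `a ∈ A`
  have hfix : ∀ a : A,
      ((HNNExtension.of ((MonoidHom.ofInjective hθ a : θ.range) : H) : Γ))⁻¹ •
        (QuotientGroup.mk (HNNExtension.t : Γ) : HNNCoset A θ hθ) =
        QuotientGroup.mk (HNNExtension.t : Γ) := by
    intro a
    rw [MulAction.Quotient.smul_mk]
    refine (QuotientGroup.eq).2 ?_
    refine ⟨(a : H), a.2, ?_⟩
    have h1 : (HNNExtension.of ((MonoidHom.ofInjective hθ a : θ.range) : H) : Γ) =
        HNNExtension.t * HNNExtension.of (a : H) * HNNExtension.t⁻¹ :=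
      HNNExtension.equiv_eq_conj a
    rw [smul_eq_mul, h1]
    group
  have key : ∀ a : A,
      lam (HNNExtension.of ((MonoidHom.ofInjective hθ a : θ.range) : H)) δ = δ := by
    intro a
    have hfix1 := hfix a
    set g : Γ := HNNExtension.of ((MonoidHom.ofInjective hθ a : θ.range) : H) with hg
    have hfix' : g • (QuotientGroup.mk (HNNExtension.t : Γ) : HNNCoset A θ hθ) =
        QuotientGroup.mk (HNNExtension.t : Γ) := by
      conv_lhs => rw [← hfix1]
      rw [smul_inv_smul]
    apply lp.ext
    funext x
    rw [hlam]
    by_cases hx : x = QuotientGroup.mk (HNNExtension.t : Γ)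
    · subst hx
      rw [hfix a]
    · have hx2 : g⁻¹ • x ≠ QuotientGroup.mk (HNNExtension.t : Γ) := by
        intro h
        apply hx
        have h2 := congrArg (g • ·) h
        simpa [smul_inv_smul, hfix'] using h2
      rw [hδ]
      rw [lp.single_apply_ne _ _ _ hx2, lp.single_apply_ne _ _ _ hx]
  -- the semidirect product and the lifted homomorphism
  set f : H →* SemidirectProduct (Multiplicative (HNNL2 A θ hθ)) Γ φ :=
    SemidirectProduct.inr.comp HNNExtension.of with hf
  set x0 : SemidirectProduct (Multiplicative (HNNL2 A θ hθ)) Γ φ :=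
    ⟨Multiplicative.ofAdd δ, HNNExtension.t⟩ with hx0
  have hx : ∀ a : A, x0 * f (a : H) = f ((MonoidHom.ofInjective hθ a : θ.range) : H) * x0 := by
    intro a
    refine SemidirectProduct.ext ?_ ?_
    · show Multiplicative.ofAdd δ * φ HNNExtension.t 1 =
        1 * φ (HNNExtension.of ((MonoidHom.ofInjective hθ a : θ.range) : H))
          (Multiplicative.ofAdd δ)
      have : φ (HNNExtension.of ((MonoidHom.ofInjective hθ a : θ.range) : H))
          (Multiplicative.ofAdd δ) = Multiplicative.ofAdd δ := by
        have := key a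
        rw [hφ]
        exact congrArg Multiplicative.ofAdd this
      rw [this, map_one, mul_one, one_mul]
    · show HNNExtension.t * HNNExtension.of (a : H) =
        HNNExtension.of ((MonoidHom.ofInjective hθ a : θ.range) : H) * HNNExtension.t
      exact HNNExtension.t_mul_of a
  set F : Γ →* SemidirectProduct (Multiplicative (HNNL2 A θ hθ)) Γ φ :=
    HNNExtension.lift f x0 hx with hF
  have hright : ∀ g : Γ, (F g).right = g := by
    have : (SemidirectProduct.rightHom.comp F) = MonoidHom.id Γ := by
      apply HNNExtension.hom_ext
      · ext h
        simp [hF, hf]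
      · simp [hF, hx0, SemidirectProduct.rightHom]
        rfl
    intro g
    exact congrFun (congrArg (fun (j : Γ →* Γ) => (j : Γ → Γ)) this) g
  set b : Γ → HNNL2 A θ hθ := fun g => Multiplicative.toAdd (F g).left with hb
  have hcoc : ∀ g h : Γ, b (g * h) = b g + lam g (b h) := by
    intro g h
    have : F (g * h) = F g * F h := map_mul F g h
    have hl : (F (g * h)).left = (F g).left * φ (F g).right (F h).left := by
      rw [this]; rfl
    rw [hb]
    simp only [hl, hright g]
    rfl
  have hH : ∀ h : H, b (HNNExtension.of h) = 0 := by
    intro h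
    have h2 : F (HNNExtension.of h) = f h := HNNExtension.lift_of f x0 hx h
    rw [hb]
    simp only [h2, hf]
    rfl
  have ht : b HNNExtension.t = δ := by
    have h2 : F HNNExtension.t = x0 := HNNExtension.lift_t f x0 hx
    show Multiplicative.toAdd (F HNNExtension.t).left = δ
    rw [h2, hx0]
    rfl
  refine ⟨b, ⟨hcoc, hH, ht⟩, ?_, ?_⟩
  · rintro s ⟨a, _, rfl⟩
    exact hH a
  · rintro b' ⟨hcoc', hH', ht'⟩
    -- build the homomorphism associated to `b'`
    set F' : Γ →* SemidirectProduct (Multiplicative (HNNL2 A θ hθ)) Γ φ :=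
      MonoidHom.mk' (fun g => ⟨Multiplicative.ofAdd (b' g), g⟩) (by
        intro g h
        refine SemidirectProduct.ext ?_ ?_
        · show Multiplicative.ofAdd (b' (g * h)) =
            Multiplicative.ofAdd (b' g) * φ g (Multiplicative.ofAdd (b' h))
          rw [hcoc' g h]
          rfl
        · rfl) with hF'
    have hFF : F' = F := by
      apply HNNExtension.hom_ext
      · apply MonoidHom.ext
        intro h
        show (⟨Multiplicative.ofAdd (b' (HNNExtension.of h)), HNNExtension.of h⟩ :
            SemidirectProduct (Multiplicative (HNNL2 A θ hθ)) Γ φ) = F (HNNExtension.of h)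
        rw [hH' h]
        rw [show F (HNNExtension.of h) = f h from HNNExtension.lift_of f x0 hx h, hf]
        rfl
      · show (⟨Multiplicative.ofAdd (b' HNNExtension.t), HNNExtension.t⟩ :
            SemidirectProduct (Multiplicative (HNNL2 A θ hθ)) Γ φ) = F HNNExtension.t
        rw [ht']
        rw [show F HNNExtension.t = x0 from HNNExtension.lift_t f x0 hx, hx0, hδ]
    funext g
    have h3 : F' g = F g := by rw [hFF]
    have hleft : Multiplicative.ofAdd (b' g) = (F g).left := by
      rw [← h3, hF']
      rfl
    show b' g = Multiplicative.toAdd (F g).left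
    rw [← hleft, toAdd_ofAdd]
end
end

section
/- Let H be a group, Σ ≤ H a subgroup and θ : Σ → H an injective group homomorphism, and let Γ = HNN(H, Σ, θ) be the HNN extension with stable letter t; identify H and Σ with their images in Γ. Let b : Γ → ℓ²_ℝ(Γ/Σ) be the unique 1-cocycle for the left translation representation λ satisfying b(h) = 0 for all h ∈ H and b(t) = δ_{tΣ}. Then the cosets tᵏΣ, k ∈ ℤ, are pairwise distinct, and for every n ≥ 1 one has b(tⁿ) = ∑_{k=1}^n δ_{tᵏΣ}, so that ‖b(tⁿ)‖² = n. In particular the cocycle b is unbounded. -/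
open scoped RealInnerProductSpace Classical ENNReal

noncomputable section

variable {H : Type*} [Group H] (A : Subgroup H) (θ : A →* H) (hθ : Function.Injective θ)

/-- Britton's lemma applied to `t^n`: a positive power of the stable letter is never in the
image of the base group. -/
lemma t_pow_nat_mem_range_iff {G : Type*} [Group G] {A B : Subgroup G} {φ : A ≃* B} {n : ℕ}
    (h : (HNNExtension.t : HNNExtension G A B φ) ^ n ∈
      (HNNExtension.of.range : Subgroup (HNNExtension G A B φ))) : n = 0 := by
  classical
  let w : HNNExtension.NormalWord.ReducedWord G A B :=
    ⟨1, List.replicate n (1, 1), List.isChain_replicate_of_rel n (fun _ => rfl)⟩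
  have hw : w.prod φ = (HNNExtension.t : HNNExtension G A B φ) ^ n := by
    simp [HNNExtension.NormalWord.ReducedWord.prod, w, List.map_replicate, List.prod_replicate]
  have hnil := HNNExtension.ReducedWord.toList_eq_nil_of_mem_of_range φ w (by rwa [hw])
  simpa [w] using hnil

lemma t_zpow_mem_range_iff {G : Type*} [Group G] {A B : Subgroup G} {φ : A ≃* B} {m : ℤ}
    (h : (HNNExtension.t : HNNExtension G A B φ) ^ m ∈
      (HNNExtension.of.range : Subgroup (HNNExtension G A B φ))) : m = 0 := by
  rcases m with n | n
  · simp only [Int.ofNat_eq_coe, zpow_natCast] at h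
    have := t_pow_nat_mem_range_iff h
    simp [this]
  · exfalso
    have h' : (HNNExtension.t : HNNExtension G A B φ) ^ (n + 1) ∈
        (HNNExtension.of.range : Subgroup (HNNExtension G A B φ)) := by
      have := inv_mem h
      rwa [← zpow_neg, Int.negSucc_eq, neg_neg, ← Nat.cast_succ, zpow_natCast] at this
    simpa using t_pow_nat_mem_range_iff h'

/-- for the canonical 1-cocycle `b` of the HNN extension (vanishing on `H`
with `b(t) = δ_{tΣ}`), the cosets `tᵏΣ` are pairwise distinct, `b(tⁿ) = ∑_{k=1}^n δ_{tᵏΣ}`,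
`‖b(tⁿ)‖² = n`, and `b` is unbounded. -/
theorem statement12
    (lam : HNNGroup A θ hθ →* (HNNL2 A θ hθ ≃ₗᵢ[ℝ] HNNL2 A θ hθ))
    (hlam : ∀ (g : HNNGroup A θ hθ) (ξ : HNNL2 A θ hθ) (x : HNNCoset A θ hθ),
      (lam g ξ) x = ξ (g⁻¹ • x))
    (b : HNNGroup A θ hθ → HNNL2 A θ hθ)
    (hcocycle : ∀ g h : HNNGroup A θ hθ, b (g * h) = b g + lam g (b h))
    (hH : ∀ h : H, b (HNNExtension.of h) = 0)
    (ht : b HNNExtension.t =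
      lp.single 2 (QuotientGroup.mk (HNNExtension.t : HNNGroup A θ hθ)) 1) :
    Function.Injective (fun k : ℤ =>
      (QuotientGroup.mk ((HNNExtension.t : HNNGroup A θ hθ) ^ k) : HNNCoset A θ hθ)) ∧
    (∀ n : ℕ, 1 ≤ n →
      b ((HNNExtension.t : HNNGroup A θ hθ) ^ n) =
        ∑ k ∈ Finset.Icc 1 n,
          lp.single 2
            (QuotientGroup.mk ((HNNExtension.t : HNNGroup A θ hθ) ^ k) : HNNCoset A θ hθ) 1) ∧
    (∀ n : ℕ, 1 ≤ n → ‖b ((HNNExtension.t : HNNGroup A θ hθ) ^ n)‖ ^ 2 = (n : ℝ)) ∧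
    ¬ ∃ C : ℝ, ∀ g : HNNGroup A θ hθ, ‖b g‖ ≤ C := by
  classical
  -- injectivity of k ↦ t^k Σ
  have hinj : Function.Injective (fun k : ℤ =>
      (QuotientGroup.mk ((HNNExtension.t : HNNGroup A θ hθ) ^ k) : HNNCoset A θ hθ)) := by
    intro j k hjk
    simp only at hjk
    rw [QuotientGroup.eq] at hjk
    have hmem : ((HNNExtension.t : HNNGroup A θ hθ) ^ j)⁻¹ *
        (HNNExtension.t : HNNGroup A θ hθ) ^ k ∈
        (HNNExtension.of.range : Subgroup (HNNGroup A θ hθ)) := by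
      rcases hjk with ⟨a, _, ha⟩
      exact ⟨a, ha⟩
    rw [← zpow_neg, ← zpow_add] at hmem
    have := t_zpow_mem_range_iff hmem
    omega
  -- lam g moves single functions
  have hsingle : ∀ (g : HNNGroup A θ hθ) (x : HNNCoset A θ hθ),
      lam g (lp.single 2 x (1 : ℝ)) = lp.single 2 (g • x) (1 : ℝ) := by
    intro g x
    apply lp.ext
    funext y
    rw [hlam]
    by_cases hy : y = g • x
    · subst hy
      rw [lp.single_apply_self, inv_smul_smul, lp.single_apply_self]
    · rw [lp.single_apply_ne _ _ _ hy, lp.single_apply_ne]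
      intro hxy
      exact hy (by rw [← hxy, smul_inv_smul])
  -- the formula for b (t^n)
  have hb : ∀ n : ℕ, 1 ≤ n →
      b ((HNNExtension.t : HNNGroup A θ hθ) ^ n) =
        ∑ k ∈ Finset.Icc 1 n,
          lp.single 2
            (QuotientGroup.mk ((HNNExtension.t : HNNGroup A θ hθ) ^ k) : HNNCoset A θ hθ) 1 := by
    intro n hn
    induction n with
    | zero => omega
    | succ m ih =>
      rcases Nat.eq_or_lt_of_le hn with h1 | h1
      · simp [← h1, ht]
      · have hm : 1 ≤ m := by omega
        have step : b ((HNNExtension.t : HNNGroup A θ hθ) ^ (m + 1)) =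
            b ((HNNExtension.t : HNNGroup A θ hθ) ^ m) +
            lam ((HNNExtension.t : HNNGroup A θ hθ) ^ m) (b HNNExtension.t) := by
          rw [pow_succ, hcocycle]
        have hmk : ((HNNExtension.t : HNNGroup A θ hθ) ^ m) •
            (QuotientGroup.mk (HNNExtension.t : HNNGroup A θ hθ) : HNNCoset A θ hθ) =
            (QuotientGroup.mk ((HNNExtension.t : HNNGroup A θ hθ) ^ (m + 1)) :
              HNNCoset A θ hθ) := by
          rw [pow_succ]; rfl
        rw [step, ih hm, ht, hsingle, hmk, Finset.sum_Icc_succ_top (by omega : 1 ≤ m + 1)]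
  -- the norm computation
  have hnorm : ∀ n : ℕ, 1 ≤ n →
      ‖b ((HNNExtension.t : HNNGroup A θ hθ) ^ n)‖ ^ 2 = (n : ℝ) := by
    intro n hn
    rw [hb n hn]
    set c : ℕ → HNNCoset A θ hθ :=
      fun k => QuotientGroup.mk ((HNNExtension.t : HNNGroup A θ hθ) ^ k) with hc
    have hcinj : Set.InjOn c (Finset.Icc 1 n) := by
      intro i _ j _ hij
      have : (fun k : ℤ =>
          (QuotientGroup.mk ((HNNExtension.t : HNNGroup A θ hθ) ^ k) : HNNCoset A θ hθ)) i =
          (fun k : ℤ =>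
          (QuotientGroup.mk ((HNNExtension.t : HNNGroup A θ hθ) ^ k) : HNNCoset A θ hθ)) j := by
        simp only [zpow_natCast]
        exact hij
      exact_mod_cast hinj this
    have hsum : (∑ k ∈ Finset.Icc 1 n, lp.single (E := fun _ : HNNCoset A θ hθ => ℝ) 2 (c k) 1) =
        ∑ i ∈ (Finset.Icc 1 n).image c, lp.single 2 i (1 : ℝ) := by
      rw [Finset.sum_image (fun i hi j hj hij => hcinj hi hj hij)]
    rw [hsum]
    have hnorm2 := lp.norm_sum_single (E := fun _ : HNNCoset A θ hθ => ℝ)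
      (p := 2) (by norm_num) (fun _ => (1 : ℝ)) ((Finset.Icc 1 n).image c)
    have htr : (2 : ℝ≥0∞).toReal = (2 : ℝ) := by norm_num
    rw [htr] at hnorm2
    have hcard : ((Finset.Icc 1 n).image c).card = n := by
      rw [Finset.card_image_of_injOn hcinj, Nat.card_Icc]
      omega
    set S := ∑ i ∈ (Finset.Icc 1 n).image c,
      lp.single (E := fun _ : HNNCoset A θ hθ => ℝ) 2 i (1 : ℝ) with hS
    have hrpow : ‖S‖ ^ (2 : ℝ) = (n : ℝ) := by
      rw [hS, hnorm2]
      simp [hcard]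
    have hconv : ‖S‖ ^ (2 : ℕ) = ‖S‖ ^ (2 : ℝ) := by
      rw [← Real.rpow_natCast _ 2]; norm_num
    rw [hconv, hrpow]
  refine ⟨hinj, hb, hnorm, ?_⟩
  rintro ⟨C, hC⟩
  set n : ℕ := ⌈C ^ 2⌉₊ + 1 with hn
  have h1 : (1 : ℕ) ≤ n := by omega
  have h2 := hnorm n h1
  have h3 := hC ((HNNExtension.t : HNNGroup A θ hθ) ^ n)
  have h0 : (0 : ℝ) ≤ C := le_trans (norm_nonneg _) h3
  have h4 : (n : ℝ) ≤ C ^ 2 := by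
    rw [← h2]
    exact pow_le_pow_left₀ (norm_nonneg _) h3 2
  have h5 : C ^ 2 ≤ (⌈C ^ 2⌉₊ : ℝ) := Nat.le_ceil _
  have h6 : ((⌈C ^ 2⌉₊ : ℕ) : ℝ) < (n : ℝ) := by
    rw [hn]; push_cast; linarith
  linarith

end
end
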